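/- arXiv:0801.3741 — 4 statements merged into one kernel-verified Lean document; each statement's English description precedes it below -/
import Mathlib

section
/- Let g be a finite-dimensional nilpotent real Lie algebra, let g' ⊆ g be a Lie subalgebra with dim g' + 2 ≤ dim g, and let X ∈ g with X ∉ g'. Assume that the Lie subalgebra of g generated by g' ∪ {X} is all of g. Then there exists Y ∈ g' such that e^{ad Y}(X) does not belong to the linear subspace g' + ℝ·X. -/
/-!
If `e^{ad Y} X ∈ W := g' + ℝ X` for every `Y ∈ g'`, then applying this to `t • Y` shows that the
vector-valued polynomial `t ↦ ∑ t^k (ad Y)^k X / k!` takes values in `W`; over an infinite field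
each of its coefficients then lies in `W`, in particular `⁅Y, X⁆`. Hence `W` is closed under the
bracket, so it is a Lie subalgebra containing `g' ∪ {X}`, i.e. `W = g`. But
`dim W ≤ dim g' + 1 < dim g`.
-/

open Finset

/-- The exponential of the (nilpotent) adjoint operator `ad Y` of a nilpotent Lie algebra,
expressed as the finite sum `∑_{k ≤ dim} (ad Y)^k / k!` (higher terms vanish since `ad Y` is a
nilpotent endomorphism of a space of dimension `dim`). -/
noncomputable def expAd {L : Type*} [LieRing L] [LieAlgebra ℝ L] (Y : L) :
    L →ₗ[ℝ] L :=
  ∑ k ∈ Finset.range (Module.finrank ℝ L + 1),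
    ((k.factorial : ℝ)⁻¹ • ((LieAlgebra.ad ℝ L Y) ^ k) : Module.End ℝ L)

section PolynomialCoefficients

variable {K V : Type*} [Field K] [Infinite K] [AddCommGroup V] [Module K V]

theorem eq_zero_of_forall_sum_pow_smul_eq_zero {n : ℕ} {v : ℕ → V}
    (h : ∀ t : K, ∑ k ∈ range n, t ^ k • v k = 0) {k : ℕ} (hk : k < n) : v k = 0 := by
  rw [← Module.forall_dual_apply_eq_zero_iff K]
  intro φ
  set p : Polynomial K := ∑ j ∈ range n, Polynomial.C (φ (v j)) * Polynomial.X ^ j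
  have hp : p = 0 := Polynomial.funext fun t => by
    simpa [p, Polynomial.eval_finsetSum, mul_comm (φ _)] using congrArg φ (h t)
  simpa [p, Polynomial.finsetSum_coeff, Polynomial.coeff_C_mul, Polynomial.coeff_X_pow, hk]
    using congrArg (Polynomial.coeff · k) hp

theorem Submodule.mem_of_forall_sum_pow_smul_mem (W : Submodule K V) {n : ℕ} {v : ℕ → V}
    (h : ∀ t : K, ∑ k ∈ range n, t ^ k • v k ∈ W) {k : ℕ} (hk : k < n) : v k ∈ W := by
  rw [← Submodule.Quotient.mk_eq_zero]
  refine eq_zero_of_forall_sum_pow_smul_eq_zero (K := K) (v := fun k => W.mkQ (v k))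
    (fun t => ?_) hk
  have hq : W.mkQ (∑ k ∈ range n, t ^ k • v k) = 0 :=
    (Submodule.Quotient.mk_eq_zero W).mpr (h t)
  simpa only [map_sum, map_smul] using hq

end PolynomialCoefficients

theorem Submodule.finrank_sup_span_singleton_le {K V : Type*} [Field K] [AddCommGroup V]
    [Module K V] [Module.Finite K V] (p : Submodule K V) (x : V) :
    Module.finrank K ↥(p ⊔ span K {x}) ≤ Module.finrank K p + 1 := by
  have hx : Module.finrank K (span K {x}) ≤ 1 :=
    (finrank_span_le_card ({x} : Set V)).trans (by simp)
  have := finrank_add_le_finrank_add_finrank p (span K {x})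
  omega

section LieAlgebra

variable {L : Type*} [LieRing L] [LieAlgebra ℝ L]

theorem expAd_smul_apply (t : ℝ) (Y X : L) :
    expAd (t • Y) X = ∑ k ∈ range (Module.finrank ℝ L + 1),
      t ^ k • ((k.factorial : ℝ)⁻¹ • (LieAlgebra.ad ℝ L Y ^ k) X) := by
  rw [expAd, LinearMap.sum_apply]
  refine sum_congr rfl fun k _ => ?_
  rw [LinearMap.smul_apply, map_smul, smul_pow, LinearMap.smul_apply, smul_comm]

theorem lie_mem_of_forall_expAd_smul_mem (hL : 0 < Module.finrank ℝ L) {W : Submodule ℝ L}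
    {Y X : L} (h : ∀ t : ℝ, expAd (t • Y) X ∈ W) : ⁅Y, X⁆ ∈ W := by
  have h₁ := W.mem_of_forall_sum_pow_smul_mem (fun t => expAd_smul_apply t Y X ▸ h t)
    (k := 1) (by omega)
  simpa using h₁

end LieAlgebra

section LieSpan

variable {R L : Type*} [CommRing R] [LieRing L] [LieAlgebra R L]

theorem LieSubalgebra.lieSpan_union_singleton_le_sup_span (g' : LieSubalgebra R L) {X : L}
    (hbr : ∀ Y ∈ g', ⁅Y, X⁆ ∈ g'.toSubmodule ⊔ Submodule.span R {X}) :
    (lieSpan R L ((g' : Set L) ∪ {X})).toSubmodule ≤ g'.toSubmodule ⊔ Submodule.span R {X} := by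
  set W := g'.toSubmodule ⊔ Submodule.span R {X}
  have hW : ∀ u ∈ W, ∀ v ∈ W, ⁅u, v⁆ ∈ W := by
    intro u hu v hv
    obtain ⟨a, ha, _, hx, rfl⟩ := Submodule.mem_sup.mp hu
    obtain ⟨b, hb, _, hy, rfl⟩ := Submodule.mem_sup.mp hv
    obtain ⟨s, rfl⟩ := Submodule.mem_span_singleton.mp hx
    obtain ⟨t, rfl⟩ := Submodule.mem_span_singleton.mp hy
    have hexp : ⁅a + s • X, b + t • X⁆ = ⁅a, b⁆ + t • ⁅a, X⁆ - s • ⁅b, X⁆ := by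
      rw [add_lie, lie_add, lie_add, smul_lie, smul_lie, lie_smul, lie_smul, lie_self,
        ← lie_skew b X]
      module
    rw [hexp]
    exact W.sub_mem (W.add_mem (Submodule.mem_sup_left (g'.lie_mem ha hb))
      (W.smul_mem t (hbr a ha))) (W.smul_mem s (hbr b hb))
  let W' : LieSubalgebra R L := { W with lie_mem' := fun hu hv => hW _ hu _ hv }
  change lieSpan R L _ ≤ W'
  rw [lieSpan_le, Set.union_subset_iff, Set.singleton_subset_iff]
  exact ⟨fun _ => Submodule.mem_sup_left,
    Submodule.mem_sup_right (Submodule.mem_span_singleton_self X)⟩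

end LieSpan

theorem exists_expAd_not_mem_span_general
    {L : Type*} [LieRing L] [LieAlgebra ℝ L]
    (g' : LieSubalgebra ℝ L)
    (hdim : Module.finrank ℝ g' + 2 ≤ Module.finrank ℝ L)
    (X : L)
    (hgen : LieSubalgebra.lieSpan ℝ L ((g' : Set L) ∪ {X}) = ⊤) :
    ∃ Y ∈ g', expAd Y X ∉ g'.toSubmodule ⊔ Submodule.span ℝ {X} := by
  by_contra! h
  have : Module.Finite ℝ L := Module.finite_of_finrank_pos (by omega)
  have hbr : ∀ Y ∈ g', ⁅Y, X⁆ ∈ g'.toSubmodule ⊔ Submodule.span ℝ {X} := fun Y hY =>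
    lie_mem_of_forall_expAd_smul_mem (by omega) fun t => h _ (g'.smul_mem t hY)
  have htop : g'.toSubmodule ⊔ Submodule.span ℝ {X} = ⊤ := by
    have hle := g'.lieSpan_union_singleton_le_sup_span hbr
    rwa [hgen, LieSubalgebra.top_toSubmodule, top_le_iff] at hle
  have hrank := g'.toSubmodule.finrank_sup_span_singleton_le X
  rw [htop, finrank_top] at hrank
  change _ ≤ Module.finrank ℝ g' + 1 at hrank
  omega

/-- If `g` is a finite-dimensional nilpotent real Lie algebra, `g'` a Lie
subalgebra with `dim g' + 2 ≤ dim g`, and `X ∉ g'` is such that `g' ∪ {X}` generates `g` as a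
Lie algebra, then there is `Y ∈ g'` with `e^{ad Y}(X) ∉ g' + ℝ·X`. -/
theorem exists_expAd_not_mem_span
    {L : Type*} [LieRing L] [LieAlgebra ℝ L] [Module.Finite ℝ L]
    [LieRing.IsNilpotent L]
    (g' : LieSubalgebra ℝ L)
    (hdim : Module.finrank ℝ g' + 2 ≤ Module.finrank ℝ L)
    (X : L) (hX : X ∉ g')
    (hgen : LieSubalgebra.lieSpan ℝ L ((g' : Set L) ∪ {X}) = ⊤) :
    ∃ Y ∈ g', expAd Y X ∉ g'.toSubmodule ⊔ Submodule.span ℝ {X} :=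
  exists_expAd_not_mem_span_general g' hdim X hgen
end

section
/- Let g be a finite-dimensional nilpotent real Lie algebra, let g' ⊆ g be a Lie subalgebra and X ∈ g. Define subspaces W₀ := ℝ·X and W_{k+1} := span{ [Y, w] : Y ∈ g', w ∈ W_k }. Then the linear span of { e^{ad Y}(X) : Y ∈ g' } equals the (finite) sum ∑_{k≥0} W_k; equivalently, it is the smallest linear subspace of g containing X that is invariant under ad Y for every Y ∈ g'. -/
/-!
The span `V` of `{e^{ad Y} X : Y ∈ g'}` contains `⨆ k, W k` because it contains `X` and is
`ad Z`-stable for `Z ∈ g'`. Extracting coefficients of the polynomial `t ↦ e^{ad tY} X` puts every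
`(ad Y)^k X` in `V`; extracting the `t`-linear part of `(ad (Y + tZ))^(m+1) X` then puts
`∑_{i+j=m} (ad Y)^i (ad Z) (ad Y)^j X` in `V`. Neighbouring summands differ by a term with
`ad ⁅Y, Z⁆` and total degree `m - 1` in `ad Y`, so by induction on `m` they are all congruent
modulo `V`; hence each of them, in particular `ad Z ((ad Y)^m X)`, lies in `V`.
-/

open Finset

theorem Submodule.coeff_mem_of_forall_sum_pow_smul_mem {K M : Type*} [Field K] [Infinite K]
    [AddCommGroup M] [Module K M] (T : Submodule K M) {N : ℕ} {c : ℕ → M}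
    (h : ∀ t : K, ∑ k ∈ range N, t ^ k • c k ∈ T) {k : ℕ} (hk : k < N) : c k ∈ T := by
  rw [← T.ker_mkQ, LinearMap.mem_ker, ← Module.forall_dual_apply_eq_zero_iff K]
  intro φ
  have hp : ∑ j ∈ range N, Polynomial.C (φ (T.mkQ (c j))) * Polynomial.X ^ j = 0 := by
    refine Polynomial.funext fun t => ?_
    have ht : φ (T.mkQ (∑ j ∈ range N, t ^ j • c j)) = 0 := by
      rw [(T.mkQ_apply _).trans ((Submodule.Quotient.mk_eq_zero T).mpr (h t)), map_zero]
    simpa only [map_sum, map_smul, smul_eq_mul, Polynomial.eval_finsetSum, Polynomial.eval_mul,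
      Polynomial.eval_C, Polynomial.eval_pow, Polynomial.eval_X, mul_comm,
      Polynomial.eval_zero] using ht
  simpa [Polynomial.finsetSum_coeff, Polynomial.coeff_C_mul_X_pow, hk] using
    congrArg (Polynomial.coeff · k) hp

namespace Polynomial

variable {R : Type*} [Semiring R]

theorem coeff_zero_C_add_C_mul_X_pow (a b : R) (n : ℕ) :
    ((C a + C b * X) ^ n).coeff 0 = a ^ n := by
  rw [← constantCoeff_apply, map_pow]
  simp

theorem coeff_one_C_add_C_mul_X_pow_succ (a b : R) (n : ℕ) :
    ((C a + C b * X) ^ (n + 1)).coeff 1 = ∑ p ∈ antidiagonal n, a ^ p.1 * b * a ^ p.2 := by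
  induction n with
  | zero => simp
  | succ n ih =>
    have : antidiagonal 1 = {(0, 1), (1, 0)} := rfl
    rw [pow_succ, coeff_mul, this, sum_pair (by simp), coeff_zero_C_add_C_mul_X_pow, ih,
      Nat.sum_antidiagonal_succ', sum_mul]
    simp [pow_succ, mul_assoc, add_comm]

end Polynomial

open Polynomial in
theorem exists_add_smul_pow_succ_eq_sum {K R : Type*} [CommSemiring K] [Semiring R] [Algebra K R]
    (a b : R) (n : ℕ) : ∃ c : ℕ → R, c 1 = ∑ p ∈ antidiagonal n, a ^ p.1 * b * a ^ p.2 ∧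
      ∀ t : K, (a + t • b) ^ (n + 1) = ∑ j ∈ range (n + 2), t ^ j • c j := by
  refine ⟨((C a + C b * X) ^ (n + 1)).coeff, coeff_one_C_add_C_mul_X_pow_succ a b n, fun t => ?_⟩
  have hcomm (r : R) : Commute (RingHom.id R r) (algebraMap K R t) := (Algebra.commutes t r).symm
  have hdeg : ((C a + C b * X) ^ (n + 1)).natDegree < n + 2 := by
    refine Nat.lt_succ_of_le (natDegree_pow_le.trans ?_)
    rw [add_comm]
    simpa using Nat.mul_le_mul_left (n + 1) (natDegree_linear_le (a := b) (b := a))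
  calc (a + t • b) ^ (n + 1)
      = eval₂RingHom' (RingHom.id R) _ hcomm ((C a + C b * X) ^ (n + 1)) := by
        simp [map_pow, Algebra.smul_def, Algebra.commutes]
    _ = _ := by
        rw [eval₂RingHom'_apply, eval₂_eq_sum_range' _ hdeg]
        simp [Algebra.smul_def, ← map_pow, Algebra.commutes]

theorem Module.End.apply_mem_of_sum_antidiagonal_mem {K M : Type*} [Field K] [CharZero K]
    [AddCommGroup M] [Module K M] {V : Submodule K M} {a b : Module.End K M} {x : M} {m : ℕ}
    (hsum : ∑ p ∈ antidiagonal m, (a ^ p.1 * b * a ^ p.2) x ∈ V)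
    (hcomm : ∀ i j, i + j + 1 = m → (a ^ i * (a * b - b * a) * a ^ j) x ∈ V) :
    ∀ p ∈ antidiagonal m, (a ^ p.1 * b * a ^ p.2) x ∈ V := by
  set y := (b * a ^ m) x
  have hcong : ∀ i j, i + j = m → (a ^ i * b * a ^ j) x - y ∈ V := by
    intro i
    induction i with
    | zero => intro j hj; simp [y, ← hj]
    | succ i ih =>
      intro j hj
      have hstep : (a ^ (i + 1) * b * a ^ j) x - (a ^ i * b * a ^ (j + 1)) x
          = (a ^ i * (a * b - b * a) * a ^ j) x := by
        simp only [← LinearMap.sub_apply]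
        rw [pow_succ a i, pow_succ' a j]
        noncomm_ring
      have := V.add_mem (hstep ▸ hcomm i j (by omega)) (ih (j + 1) (by omega))
      rwa [sub_add_sub_cancel] at this
  have hy : y ∈ V := by
    have hsub := V.sub_mem hsum (V.sum_mem fun p hp => hcong p.1 p.2 (mem_antidiagonal.mp hp))
    simp only [← sum_sub_distrib, sub_sub_cancel, sum_const, Nat.card_antidiagonal,
      ← Nat.cast_smul_eq_nsmul K] at hsub
    exact (V.smul_mem_iff (Nat.cast_ne_zero.mpr m.succ_ne_zero)).mp hsub
  intro p hp
  simpa using V.add_mem (hcong p.1 p.2 (mem_antidiagonal.mp hp)) hy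

theorem IsNilpotent.pow_finrank_eq_zero {R M : Type*} [CommRing R] [IsDomain R] [AddCommGroup M]
    [Module R M] [Module.Finite R M] [Module.Free R M] {φ : Module.End R M} (h : IsNilpotent φ) :
    φ ^ Module.finrank R M = 0 := by
  simpa [h.charpoly_eq_X_pow_finrank] using φ.aeval_self_charpoly

section LieAlgebra

variable {L : Type*} [LieRing L] [LieAlgebra ℝ L]

open LieAlgebra

theorem expAd_apply (Y X : L) :
    expAd Y X = ∑ k ∈ range (Module.finrank ℝ L + 1), (k.factorial : ℝ)⁻¹ • (ad ℝ L Y ^ k) X := by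
  simp [expAd]

variable [Module.Finite ℝ L] [LieRing.IsNilpotent L]

theorem ad_pow_eq_zero_of_finrank_le (Y : L) {k : ℕ} (hk : Module.finrank ℝ L ≤ k) :
    ad ℝ L Y ^ k = 0 :=
  pow_eq_zero_of_le hk (LieModule.isNilpotent_toEnd_of_isNilpotent ℝ L L Y).pow_finrank_eq_zero

variable {g' : LieSubalgebra ℝ L} {X : L}

theorem ad_pow_apply_mem_span_expAd {Y : L} (hY : Y ∈ g') (k : ℕ) :
    (ad ℝ L Y ^ k) X ∈ Submodule.span ℝ {z | ∃ Y ∈ g', z = expAd Y X} := by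
  set V := Submodule.span ℝ {z | ∃ Y ∈ g', z = expAd Y X}
  rcases lt_or_ge k (Module.finrank ℝ L + 1) with hk | hk
  · have hexp (t : ℝ) : ∑ j ∈ range (Module.finrank ℝ L + 1),
        t ^ j • ((j.factorial : ℝ)⁻¹ • (ad ℝ L Y ^ j) X) ∈ V := by
      have : expAd (t • Y) X = ∑ j ∈ range (Module.finrank ℝ L + 1),
          t ^ j • ((j.factorial : ℝ)⁻¹ • (ad ℝ L Y ^ j) X) := by
        simp only [expAd_apply, map_smul, smul_pow, LinearMap.smul_apply, smul_comm (t ^ _)]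
      exact this ▸ Submodule.subset_span ⟨t • Y, g'.smul_mem t hY, rfl⟩
    exact (V.smul_mem_iff (by positivity)).mp (V.coeff_mem_of_forall_sum_pow_smul_mem hexp hk)
  · rw [ad_pow_eq_zero_of_finrank_le Y (by omega), LinearMap.zero_apply]
    exact V.zero_mem

theorem sum_antidiagonal_ad_pow_mul_ad_mul_ad_pow_apply_mem_span_expAd {Y Z : L} (hY : Y ∈ g')
    (hZ : Z ∈ g') (m : ℕ) :
    ∑ p ∈ antidiagonal m, (ad ℝ L Y ^ p.1 * ad ℝ L Z * ad ℝ L Y ^ p.2) X ∈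
      Submodule.span ℝ {z | ∃ Y ∈ g', z = expAd Y X} := by
  obtain ⟨c, hc1, hc⟩ := exists_add_smul_pow_succ_eq_sum (K := ℝ) (ad ℝ L Y) (ad ℝ L Z) m
  have hline (t : ℝ) : ∑ j ∈ range (m + 2), t ^ j • c j X ∈
      Submodule.span ℝ {z | ∃ Y ∈ g', z = expAd Y X} := by
    have := ad_pow_apply_mem_span_expAd (X := X) (g'.add_mem hY (g'.smul_mem t hZ)) (m + 1)
    rwa [map_add, map_smul, hc, LinearMap.coe_sum, Finset.sum_apply] at this
  simpa [hc1, LinearMap.coe_sum, Finset.sum_apply] using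
    Submodule.coeff_mem_of_forall_sum_pow_smul_mem _ hline (k := 1) (by omega)

theorem ad_pow_mul_ad_mul_ad_pow_apply_mem_span_expAd (m : ℕ) {Y Z : L} (hY : Y ∈ g')
    (hZ : Z ∈ g') : ∀ p ∈ antidiagonal m, (ad ℝ L Y ^ p.1 * ad ℝ L Z * ad ℝ L Y ^ p.2) X ∈
      Submodule.span ℝ {z | ∃ Y ∈ g', z = expAd Y X} := by
  induction m generalizing Z with
  | zero =>
    exact Module.End.apply_mem_of_sum_antidiagonal_mem
      (sum_antidiagonal_ad_pow_mul_ad_mul_ad_pow_apply_mem_span_expAd hY hZ 0) (by omega)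
  | succ m ih =>
    refine Module.End.apply_mem_of_sum_antidiagonal_mem
      (sum_antidiagonal_ad_pow_mul_ad_mul_ad_pow_apply_mem_span_expAd hY hZ _) fun i j hij => ?_
    have hbracket : ad ℝ L Y * ad ℝ L Z - ad ℝ L Z * ad ℝ L Y = ad ℝ L ⁅Y, Z⁆ := by
      ext w
      simp
    rw [hbracket]
    exact ih (g'.lie_mem hY hZ) (i, j) (mem_antidiagonal.mpr (by omega))

theorem span_expAd_le_comap_ad {Z : L} (hZ : Z ∈ g') :
    Submodule.span ℝ {z | ∃ Y ∈ g', z = expAd Y X} ≤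
      (Submodule.span ℝ {z | ∃ Y ∈ g', z = expAd Y X}).comap (ad ℝ L Z) := by
  rw [Submodule.span_le]
  rintro _ ⟨Y, hY, rfl⟩
  rw [SetLike.mem_coe, Submodule.mem_comap, expAd_apply, map_sum]
  refine Submodule.sum_mem _ fun k _ => ?_
  rw [map_smul]
  refine Submodule.smul_mem _ _ ?_
  simpa using ad_pow_mul_ad_mul_ad_pow_apply_mem_span_expAd k hY hZ (0, k) (by simp)

end LieAlgebra

/-- For a finite-dimensional nilpotent real Lie algebra `g`, a Lie subalgebra
`g'` and `X ∈ g`, with `W₀ := ℝ·X` and `W_{k+1} := span{[Y,w] : Y ∈ g', w ∈ W_k}`, the linear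
span of `{e^{ad Y}(X) : Y ∈ g'}` equals `∑_k W_k = ⨆ k, W k`. -/
theorem span_expAd_eq_iSup
    {L : Type*} [LieRing L] [LieAlgebra ℝ L] [Module.Finite ℝ L]
    [LieRing.IsNilpotent L]
    (g' : LieSubalgebra ℝ L) (X : L)
    (W : ℕ → Submodule ℝ L)
    (hW0 : W 0 = Submodule.span ℝ {X})
    (hWsucc : ∀ k, W (k + 1) =
      Submodule.span ℝ {z : L | ∃ Y ∈ g', ∃ w ∈ W k, z = ⁅Y, w⁆}) :
    Submodule.span ℝ {z : L | ∃ Y ∈ g', z = expAd Y X} = ⨆ k, W k := by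
  apply le_antisymm
  · rw [Submodule.span_le]
    rintro _ ⟨Y, hY, rfl⟩
    have hW (k : ℕ) : (LieAlgebra.ad ℝ L Y ^ k) X ∈ W k := by
      induction k with
      | zero => simp [hW0, Submodule.mem_span_singleton_self]
      | succ k ih =>
        rw [hWsucc, pow_succ', Module.End.mul_apply]
        exact Submodule.subset_span ⟨Y, hY, _, ih, rfl⟩
    rw [SetLike.mem_coe, expAd_apply]
    exact Submodule.sum_mem _ fun k _ => Submodule.smul_mem _ _ (le_iSup W k (hW k))
  · refine iSup_le fun k => ?_
    induction k with
    | zero =>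
      rw [hW0, Submodule.span_singleton_le_iff_mem]
      simpa using ad_pow_apply_mem_span_expAd (X := X) g'.zero_mem 0
    | succ k ih =>
      rw [hWsucc, Submodule.span_le]
      rintro _ ⟨Y, hY, w, hw, rfl⟩
      exact span_expAd_le_comap_ad hY (ih hw)
end

section
/- Let μ be a nonnegative Radon measure on ℝⁿ, let A ⊆ ℝⁿ, and let a ∈ A be a point with μ(B_r(a)) > 0 for all r > 0 which is a density point of A relative to the outer measure induced by μ, i.e. lim_{r↓0} μ(A ∩ B_r(a)) / μ(B_r(a)) = 1 (with μ evaluated on A ∩ B_r(a) as an outer measure). Suppose r_i ↓ 0 and λ_i ≥ 0 are such that the measures λ_i · (T_{a,r_i})_♯ μ converge weakly* to a Radon measure ν. Then for every y in the support of ν, dist(a + r_i y, A) / r_i → 0 as i → ∞. -/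
open MeasureTheory Filter Metric Set
open scoped Topology NNReal ENNReal

/-!
Suppose the rescaled points `a + rᵢ y` stay at distance `≥ ε rᵢ` from `A` along a subsequence.
Weak* convergence gives a lower bound `c > 0` for the rescaled mass `λᵢ μ(B_{ε rᵢ}(a + rᵢ y))`
of a ball that avoids `A`, and an upper bound `C` for the rescaled mass `λᵢ μ(B_{R rᵢ}(a))` of
a larger ball around `a` containing it. Since `a` is a density point of `A`, the mass of the
part of `B_{R rᵢ}(a)` avoiding `A` is `o(μ(B_{R rᵢ}(a)))`, hence `c ≤ C · o(1)`, a contradiction.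
-/

section VagueConvergence

variable {X ι : Type*} [TopologicalSpace X] [T2Space X] [LocallyCompactSpace X]
  [MeasurableSpace X] [BorelSpace X] {l : Filter ι} {μ : ι → Measure X} {ν : Measure X}
  {K U : Set X}

theorem eventually_lt_measure_of_tendsto_integral [IsFiniteMeasureOnCompacts ν]
    (hconv : ∀ φ : X → ℝ, Continuous φ → HasCompactSupport φ →
      Tendsto (fun i => ∫ x, φ x ∂μ i) l (𝓝 (∫ x, φ x ∂ν)))
    (hK : IsCompact K) (hU : IsOpen U) (hKU : K ⊆ U) {c : ℝ≥0∞} (hc : c < ν K) :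
    ∀ᶠ i in l, c < μ i U := by
  obtain ⟨φ, hφK, hφc, hφU, hφ01⟩ := exists_continuousMap_one_of_isCompact_subset_isOpen hK hU hKU
  have hKφ : ν K ≤ ENNReal.ofReal (∫ x, φ x ∂ν) :=
    (φ.continuous.integrable_of_hasCompactSupport hφc).measure_le_integral
      (Eventually.of_forall fun x => (hφ01 x).1) fun x hx => (hφK hx).ge
  have hlim := (ENNReal.continuous_ofReal.tendsto _).comp (hconv φ φ.continuous hφc)
  filter_upwards [hlim.eventually (eventually_gt_nhds (hc.trans_le hKφ))] with i hi
  exact hi.trans_le <| integral_le_measure (fun x _ => (hφ01 x).2)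
    fun x hx => (image_eq_zero_of_notMem_tsupport fun h => hx (hφU h)).le

theorem eventually_measure_lt_of_tendsto_integral [∀ i, IsFiniteMeasureOnCompacts (μ i)]
    (hconv : ∀ φ : X → ℝ, Continuous φ → HasCompactSupport φ →
      Tendsto (fun i => ∫ x, φ x ∂μ i) l (𝓝 (∫ x, φ x ∂ν)))
    (hK : IsCompact K) (hU : IsOpen U) (hKU : K ⊆ U) {c : ℝ≥0∞} (hc : ν U < c) :
    ∀ᶠ i in l, μ i K < c := by
  obtain ⟨φ, hφK, hφc, hφU, hφ01⟩ := exists_continuousMap_one_of_isCompact_subset_isOpen hK hU hKU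
  have hφU : ENNReal.ofReal (∫ x, φ x ∂ν) ≤ ν U := integral_le_measure (fun x _ => (hφ01 x).2)
    fun x hx => (image_eq_zero_of_notMem_tsupport fun h => hx (hφU h)).le
  have hlim := (ENNReal.continuous_ofReal.tendsto _).comp (hconv φ φ.continuous hφc)
  filter_upwards [hlim.eventually (eventually_lt_nhds (hφU.trans_lt hc))] with i hi
  exact ((φ.continuous.integrable_of_hasCompactSupport hφc).measure_le_integral
    (Eventually.of_forall fun x => (hφ01 x).1) fun x hx => (hφK hx).ge).trans_lt hi

end VagueConvergence

section Rescaling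

variable {E : Type*} [NormedAddCommGroup E] [NormedSpace ℝ E]

theorem preimage_smul_sub_ball {r : ℝ} (hr : 0 < r) (a y : E) (s : ℝ) :
    (fun z => r⁻¹ • (z - a)) ⁻¹' ball y s = ball (a + r • y) (r * s) := by
  ext z
  have hz : r⁻¹ • (z - a) - y = r⁻¹ • (z - (a + r • y)) := by
    rw [smul_sub, sub_sub, smul_sub, smul_add, smul_smul, inv_mul_cancel₀ hr.ne', one_smul]
  simp only [mem_preimage, mem_ball, dist_eq_norm, hz, norm_smul, norm_inv, Real.norm_eq_abs,
    abs_of_pos hr, inv_mul_lt_iff₀ hr]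

theorem ball_add_smul_subset_ball {r : ℝ} (hr : 0 ≤ r) (a y : E) (s : ℝ) :
    ball (a + r • y) (r * s) ⊆ ball a (r * (‖y‖ + s)) := ball_subset_ball' <| by
  rw [dist_self_add_left, norm_smul, Real.norm_of_nonneg hr]; linarith

theorem smul_map_smul_sub_apply_ball [MeasurableSpace E] [BorelSpace E] (μ : Measure E)
    (c : ℝ≥0∞) {r : ℝ} (hr : 0 < r) (a y : E) (s : ℝ) :
    (c • μ.map (fun z => r⁻¹ • (z - a))) (ball y s) = c * μ (ball (a + r • y) (r * s)) := by
  rw [Measure.smul_apply, Measure.map_apply (by fun_prop) measurableSet_ball,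
    preimage_smul_sub_ball hr, smul_eq_mul]

theorem isFiniteMeasureOnCompacts_smul_map_smul_sub [MeasurableSpace E] [BorelSpace E]
    (μ : Measure E) [IsFiniteMeasureOnCompacts μ] (c : ℝ≥0) {r : ℝ} (hr : r ≠ 0) (a : E) :
    IsFiniteMeasureOnCompacts ((c : ℝ≥0∞) • μ.map (fun z => r⁻¹ • (z - a))) :=
  have : IsFiniteMeasureOnCompacts (μ.map (fun z => r⁻¹ • (z - a))) :=
    Measure.IsFiniteMeasureOnCompacts.map μ
      ((Homeomorph.subRight a).trans (Homeomorph.smulOfNeZero r⁻¹ (inv_ne_zero hr)))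
  IsFiniteMeasureOnCompacts.smul _ ENNReal.coe_ne_top

end Rescaling

theorem measure_le_mul_one_sub_div_of_disjoint {α : Type*} [MeasurableSpace α] {μ : Measure α}
    {A B S : Set α} (hS : MeasurableSet S) (hSB : S ⊆ B) (hSA : Disjoint S A) (hB : μ B ≠ ∞) :
    μ S ≤ μ B * (1 - μ (A ∩ B) / μ B) := by
  rcases eq_or_ne (μ B) 0 with h0 | h0
  · simpa [h0] using measure_mono (μ := μ) hSB
  have hsum : μ S + μ (A ∩ B) ≤ μ B := by
    rw [← measure_union' (μ := μ) (hSA.mono_right inter_subset_left) hS]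
    exact measure_mono (union_subset hSB inter_subset_right)
  rw [ENNReal.mul_sub fun _ _ => hB, mul_one, ENNReal.mul_div_cancel h0 hB]
  exact ENNReal.le_sub_of_add_le_right
    (measure_mono inter_subset_right |>.trans_lt hB.lt_top).ne hsum

theorem eventually_measure_le_mul_of_disjoint_of_density {α : Type*} [PseudoMetricSpace α]
    [ProperSpace α] [MeasurableSpace α] {μ : Measure α} [IsFiniteMeasureOnCompacts μ]
    {A : Set α} {a : α}
    (hdens : Tendsto (fun r : ℝ => μ (A ∩ ball a r) / μ (ball a r)) (𝓝[>] 0) (𝓝 1))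
    {δ : ℝ≥0∞} (hδ : 0 < δ) :
    ∀ᶠ r in 𝓝[>] 0, ∀ S, MeasurableSet S → S ⊆ ball a r → Disjoint S A →
      μ S ≤ δ * μ (ball a r) := by
  have hdefect : Tendsto (fun r : ℝ => 1 - μ (A ∩ ball a r) / μ (ball a r)) (𝓝[>] 0) (𝓝 0) := by
    simpa using ENNReal.Tendsto.sub tendsto_const_nhds hdens (Or.inl ENNReal.one_ne_top)
  filter_upwards [hdefect.eventually (eventually_lt_nhds hδ)] with r hr S hS hSB hSA
  calc μ S ≤ μ (ball a r) * (1 - μ (A ∩ ball a r) / μ (ball a r)) :=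
        measure_le_mul_one_sub_div_of_disjoint hS hSB hSA measure_ball_lt_top.ne
    _ ≤ μ (ball a r) * δ := by gcongr
    _ = δ * μ (ball a r) := mul_comm _ _

theorem blowup_support_close_to_set_general
    {n : ℕ} (μ : Measure (EuclideanSpace ℝ (Fin n))) [IsLocallyFiniteMeasure μ]
    (A : Set (EuclideanSpace ℝ (Fin n))) (a : EuclideanSpace ℝ (Fin n))
    (hdens : Tendsto (fun r : ℝ => μ (A ∩ ball a r) / μ (ball a r)) (𝓝[>] 0) (𝓝 1))
    (r : ℕ → ℝ) (hrpos : ∀ i, 0 < r i) (hr0 : Tendsto r atTop (𝓝 0))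
    (lam : ℕ → ℝ≥0)
    (ν : Measure (EuclideanSpace ℝ (Fin n))) [IsLocallyFiniteMeasure ν]
    (hconv : ∀ φ : EuclideanSpace ℝ (Fin n) → ℝ, Continuous φ → HasCompactSupport φ →
      Tendsto (fun i =>
          ∫ z, φ z ∂((lam i : ℝ≥0∞) • Measure.map (fun z => (r i)⁻¹ • (z - a)) μ))
        atTop (𝓝 (∫ z, φ z ∂ν))) :
    ∀ y : EuclideanSpace ℝ (Fin n), (∀ ε : ℝ, 0 < ε → 0 < ν (ball y ε)) →
      Tendsto (fun i => infDist (a + r i • y) A / r i) atTop (𝓝 0) := by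
  intro y hy
  refine tendsto_order.2 ⟨fun b hb => .of_forall fun i =>
    hb.trans_le (div_nonneg infDist_nonneg (hrpos i).le), fun ε hε => ?_⟩
  have := fun i => isFiniteMeasureOnCompacts_smul_map_smul_sub μ (lam i) (hrpos i).ne' a
  obtain ⟨c, hc0, hcν⟩ := exists_between <|
    (hy (ε / 2) (half_pos hε)).trans_le (measure_mono ball_subset_closedBall)
  have hnear := eventually_lt_measure_of_tendsto_integral hconv (isCompact_closedBall y _)
    isOpen_ball (closedBall_subset_ball (half_lt_self hε)) hcν
  set R := ‖y‖ + ε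
  set C := ν (ball 0 (R + 1)) + 1
  have hC : C ≠ ∞ := by finiteness
  have hfar := eventually_measure_lt_of_tendsto_integral hconv (isCompact_closedBall 0 R)
    isOpen_ball (closedBall_subset_ball (lt_add_one R))
    (ENNReal.lt_add_right measure_ball_lt_top.ne one_ne_zero : _ < C)
  have hRr : Tendsto (fun i => r i * R) atTop (𝓝[>] 0) :=
    tendsto_nhdsWithin_iff.2 ⟨by simpa using hr0.mul_const R,
      .of_forall fun i => mul_pos (hrpos i) (by positivity)⟩
  have hsmall := hRr.eventually <|
    eventually_measure_le_mul_of_disjoint_of_density hdens (ENNReal.div_pos hc0.ne' hC)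
  filter_upwards [hnear, hfar, hsmall] with i hnear hfar hsmall
  by_contra hfarA
  rw [not_lt, le_div_iff₀ (hrpos i)] at hfarA
  have hA : Disjoint (ball (a + r i • y) (r i * ε)) A :=
    disjoint_ball_infDist.mono_left <| ball_subset_ball <| by linarith
  rw [smul_map_smul_sub_apply_ball μ _ (hrpos i)] at hnear
  replace hfar := (measure_mono ball_subset_closedBall).trans_lt hfar
  rw [smul_map_smul_sub_apply_ball μ _ (hrpos i), smul_zero, add_zero] at hfar
  refine lt_irrefl c <| calc
    c < lam i * μ (ball (a + r i • y) (r i * ε)) := hnear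
    _ ≤ lam i * (c / C * μ (ball a (r i * R))) := by
      gcongr
      exact hsmall _ measurableSet_ball (ball_add_smul_subset_ball (hrpos i).le a y ε) hA
    _ = c / C * (lam i * μ (ball a (r i * R))) := mul_left_comm _ _ _
    _ ≤ c / C * C := by gcongr
    _ = c := ENNReal.div_mul_cancel (by positivity) hC

/-- Let `μ` be a nonnegative Radon measure on `ℝⁿ`, `A ⊆ ℝⁿ`, and `a ∈ A` a
point with `μ(B_r(a)) > 0` for all `r > 0` which is a density point of `A` for the outer
measure of `μ`. If `λ_i (T_{a,r_i})_♯ μ → ν` weakly* for some `r_i ↓ 0`, `λ_i ≥ 0`, then every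
point `y` of the support of `ν` satisfies `dist(a + r_i y, A)/r_i → 0`. -/
theorem blowup_support_close_to_set
    {n : ℕ} (μ : Measure (EuclideanSpace ℝ (Fin n))) [IsLocallyFiniteMeasure μ]
    (A : Set (EuclideanSpace ℝ (Fin n))) (a : EuclideanSpace ℝ (Fin n)) (ha : a ∈ A)
    (hpos : ∀ r : ℝ, 0 < r → 0 < μ (ball a r))
    (hdens : Tendsto (fun r : ℝ => μ (A ∩ ball a r) / μ (ball a r)) (𝓝[>] 0) (𝓝 1))
    (r : ℕ → ℝ) (hrpos : ∀ i, 0 < r i) (hr0 : Tendsto r atTop (𝓝 0))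
    (lam : ℕ → ℝ≥0)
    (ν : Measure (EuclideanSpace ℝ (Fin n))) [IsLocallyFiniteMeasure ν]
    (hconv : ∀ φ : EuclideanSpace ℝ (Fin n) → ℝ, Continuous φ → HasCompactSupport φ →
      Tendsto (fun i =>
          ∫ z, φ z ∂((lam i : ℝ≥0∞) • Measure.map (fun z => (r i)⁻¹ • (z - a)) μ))
        atTop (𝓝 (∫ z, φ z ∂ν))) :
    ∀ y : EuclideanSpace ℝ (Fin n), (∀ ε : ℝ, 0 < ε → 0 < ν (ball y ε)) →
      Tendsto (fun i => infDist (a + r i • y) A / r i) atTop (𝓝 0) :=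
  blowup_support_close_to_set_general μ A a hdens r hrpos hr0 lam ν hconv
end

section
/- Let (X, d) be a complete separable metric space and let μ be a Radon measure on X which is asymptotically doubling: limsup_{r↓0} μ(B_{2r}(x)) / μ(B_r(x)) < +∞ for μ-a.e. x. Then for every set A ⊆ X (not necessarily measurable), μ-almost every point x of A is a density point of A relative to the outer measure μ*: lim_{r↓0} μ*(A ∩ B_r(x)) / μ(B_r(x)) = 1. Here 'μ-almost every point of A' means that the set of points of A where the conclusion fails has μ-outer measure zero. -/
/-!
If at every point of `B` there are arbitrarily small radii at which the closed ball is
`C`-doubling and `B` fills at most a fraction `c < 1` of it, the Vitali covering theorem gives,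
inside any open `U ⊇ B`, disjoint such balls covering almost all of `B`; hence
`μ B ≤ c * μ U`, and outer regularity forces `μ B = 0` (locally, where `μ B < ∞`).
Asymptotic doubling provides an integer `C` at almost every point, and lower density `< 1`
provides a rational `c < 1`, so countably many such sets cover the points of `A` of lower
density `< 1`. As the density ratio never exceeds `1`, lower density `1` means it tends to `1`.
-/

open MeasureTheory Filter Metric Set
open scoped Topology ENNReal NNReal

namespace MeasureTheory

variable {X : Type*} [PseudoMetricSpace X] [MeasurableSpace X] {μ : Measure X}

lemma tendsto_measure_closedBall_of_tendsto_of_lt (x : X) {r : ℝ} {u : ℕ → ℝ} (hu : Monotone u)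
    (hur : ∀ n, u n < r) (hlim : Tendsto u atTop (𝓝 r)) :
    Tendsto (fun n ↦ μ (closedBall x (u n))) atTop (𝓝 (μ (ball x r))) := by
  have hunion : ⋃ n, closedBall x (u n) = ball x r := by
    refine (iUnion_subset fun n ↦ closedBall_subset_ball (hur n)).antisymm fun y hy ↦ ?_
    obtain ⟨n, hn⟩ := (hlim.eventually (lt_mem_nhds (mem_ball.1 hy))).exists
    exact mem_iUnion.2 ⟨n, hn.le⟩
  rw [← hunion]
  exact tendsto_measure_iUnion_atTop fun m n hmn ↦ closedBall_subset_closedBall (hu hmn)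

lemma eventually_measure_ball_ne_top [IsLocallyFiniteMeasure μ] (x : X) :
    ∀ᶠ r in 𝓝[>] 0, μ (ball x r) ≠ ∞ := by
  obtain ⟨s, hs, hμs⟩ := μ.finiteAt_nhds x
  obtain ⟨ε, hε, hεs⟩ := Metric.mem_nhds_iff.1 hs
  filter_upwards [Ioo_mem_nhdsGT hε] with r hr
  exact (measure_mono ((ball_subset_ball hr.2.le).trans hεs)).trans_lt hμs |>.ne

lemma frequently_measure_inter_closedBall_le_of_liminf_lt [IsLocallyFiniteMeasure μ]
    (A : Set X) (x : X) {c : ℝ≥0∞}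
    (h : liminf (fun r ↦ μ (A ∩ ball x r) / μ (ball x r)) (𝓝[>] 0) < c) :
    ∃ᶠ r in 𝓝[>] 0, μ (A ∩ closedBall x r) ≤ c * μ (closedBall x r) := by
  obtain ⟨c', hlim, hc'⟩ := exists_between h
  rw [(nhdsGT_basis 0).frequently_iff]
  intro ε hε
  obtain ⟨r, hratio, hfin, hr⟩ :=
    ((frequently_lt_of_liminf_lt (by isBoundedDefault) hlim).and_eventually
      ((eventually_measure_ball_ne_top (μ := μ) x).and (Ioo_mem_nhdsGT hε))).exists
  have hnum : μ (A ∩ ball x r) ≤ c' * μ (ball x r) :=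
    (ENNReal.div_le_iff_le_mul (Or.inr hc'.ne_top) (Or.inl hfin)).1 hratio.le
  -- closed balls of radius `s ↑ r` exhaust `ball x r`, so the gap `c' < c` absorbs the difference
  obtain ⟨u, hu, hu_mem, hu_lim⟩ := exists_seq_strictMono_tendsto' hr.1
  have hlarge : ∃ n, c' * μ (ball x r) ≤ c * μ (closedBall x (u n)) := by
    rcases eq_or_ne (μ (ball x r)) 0 with h0 | h0
    · exact ⟨0, by simp [h0]⟩
    have hconv := ENNReal.Tendsto.const_mul (a := c) (tendsto_measure_closedBall_of_tendsto_of_lt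
      x hu.monotone (fun n ↦ (hu_mem n).2) hu_lim) (Or.inl h0)
    obtain ⟨n, hn⟩ := (hconv.eventually (lt_mem_nhds (ENNReal.mul_lt_mul_left h0 hfin hc'))).exists
    exact ⟨n, hn.le⟩
  obtain ⟨n, hn⟩ := hlarge
  refine ⟨u n, ⟨(hu_mem n).1, (hu_mem n).2.trans hr.2⟩, ?_⟩
  calc μ (A ∩ closedBall x (u n)) ≤ μ (A ∩ ball x r) := by
        gcongr; exact closedBall_subset_ball (hu_mem n).2
    _ ≤ c' * μ (ball x r) := hnum
    _ ≤ c * μ (closedBall x (u n)) := hn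

lemma exists_nat_eventually_measure_ball_two_mul_le (x : X)
    (h : limsup (fun r ↦ μ (ball x (2 * r)) / μ (ball x r)) (𝓝[>] 0) < ⊤) :
    ∃ n : ℕ, ∀ᶠ r in 𝓝[>] 0, μ (ball x (2 * r)) ≤ n * μ (ball x r) := by
  obtain ⟨n, hn⟩ := ENNReal.exists_nat_gt h.ne
  refine ⟨n, (eventually_lt_of_limsup_lt hn).mono fun r hr ↦ ?_⟩
  exact (ENNReal.div_le_iff_le_mul (Or.inr (ENNReal.natCast_ne_top n))
    (Or.inr (pos_of_gt hn).ne')).1 hr.le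

lemma exists_nat_eventually_measure_closedBall_three_mul_le (x : X)
    (h : limsup (fun r ↦ μ (ball x (2 * r)) / μ (ball x r)) (𝓝[>] 0) < ⊤) :
    ∃ n : ℕ, ∀ᶠ r in 𝓝[>] 0, μ (closedBall x (3 * r)) ≤ n * μ (closedBall x r) := by
  obtain ⟨n, hn⟩ := exists_nat_eventually_measure_ball_two_mul_le x h
  refine ⟨n * n, ?_⟩
  filter_upwards [hn, eventually_nhdsGT_zero_mul_left two_pos hn, self_mem_nhdsWithin]
    with r hr h2r (hr0 : 0 < r)
  calc μ (closedBall x (3 * r)) ≤ μ (ball x (2 * (2 * r))) :=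
        measure_mono (closedBall_subset_ball (by linarith))
    _ ≤ n * (n * μ (ball x r)) := h2r.trans (by gcongr)
    _ ≤ ↑(n * n) * μ (closedBall x r) := by
        rw [Nat.cast_mul, mul_assoc]; gcongr; exact ball_subset_closedBall

section Covering

variable [SecondCountableTopology X] [OpensMeasurableSpace X] [IsLocallyFiniteMeasure μ]
  {B : Set X} {C : ℝ≥0} {c : ℝ≥0∞}

lemma measure_le_mul_of_frequently_measure_inter_closedBall_le {U : Set X} (hU : IsOpen U)
    (hBU : B ⊆ U)
    (h : ∀ x ∈ B, ∃ᶠ r in 𝓝[>] 0, μ (closedBall x (3 * r)) ≤ C * μ (closedBall x r) ∧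
      μ (B ∩ closedBall x r) ≤ c * μ (closedBall x r)) :
    μ B ≤ c * μ U := by
  let t : Set (ℝ × X) := {p | p.2 ∈ B ∧ 0 < p.1 ∧ closedBall p.2 p.1 ⊆ U ∧
    μ (closedBall p.2 (3 * p.1)) ≤ C * μ (closedBall p.2 p.1) ∧
    μ (B ∩ closedBall p.2 p.1) ≤ c * μ (closedBall p.2 p.1)}
  have hfine : ∀ x ∈ B, ∃ᶠ r in 𝓝[>] 0, ∃ p ∈ t, p.1 = r ∧ p.2 = x := by
    intro x hx
    obtain ⟨ρ, hρ, hρU⟩ := Metric.isOpen_iff.1 hU x (hBU hx)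
    refine ((h x hx).and_eventually (Ioo_mem_nhdsGT hρ)).mono ?_
    rintro r ⟨⟨hdoub, hdens⟩, hr⟩
    exact ⟨(r, x), ⟨hx, hr.1, (closedBall_subset_ball hr.2).trans hρU, hdoub, hdens⟩, rfl, rfl⟩
  obtain ⟨u, hut, hu, hdisj, hcov⟩ := Vitali.exists_disjoint_covering_ae' μ B t C Prod.fst
    Prod.snd (fun p ↦ closedBall p.2 p.1) (fun _ _ ↦ subset_rfl) (fun _ hp ↦ hp.2.2.2.1)
    (fun _ hp ↦ (nonempty_ball.2 hp.2.1).mono ball_subset_interior_closedBall)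
    (fun _ _ ↦ isClosed_closedBall) hfine
  calc μ B ≤ μ (B ∩ ⋃ p ∈ u, closedBall p.2 p.1) := by
        simpa [hcov] using measure_le_inter_add_sdiff μ B (⋃ p ∈ u, closedBall p.2 p.1)
    _ ≤ ∑' p : u, μ (B ∩ closedBall p.1.2 p.1.1) := by
        rw [inter_iUnion₂]; exact measure_biUnion_le μ hu _
    _ ≤ ∑' p : u, c * μ (closedBall p.1.2 p.1.1) :=
        ENNReal.tsum_le_tsum fun p ↦ (hut p.2).2.2.2.2
    _ = c * μ (⋃ p ∈ u, closedBall p.2 p.1) := by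
        rw [ENNReal.tsum_mul_left, measure_biUnion hu hdisj fun _ _ ↦ measurableSet_closedBall]
    _ ≤ c * μ U := by
        gcongr; exact iUnion₂_subset fun p hp ↦ (hut hp).2.2.1

lemma measure_eq_zero_of_frequently_measure_inter_closedBall_le [μ.OuterRegular] (hc : c < 1)
    (h : ∀ x ∈ B, ∃ᶠ r in 𝓝[>] 0, μ (closedBall x (3 * r)) ≤ C * μ (closedBall x r) ∧
      μ (B ∩ closedBall x r) ≤ c * μ (closedBall x r)) :
    μ B = 0 := by
  refine measure_null_of_locally_null B fun x hx ↦ ?_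
  obtain ⟨V, hV, hμV⟩ := μ.finiteAt_nhds x
  refine ⟨B ∩ V, inter_mem_nhdsWithin B hV, ?_⟩
  have hfin : μ (B ∩ V) ≠ ∞ := (measure_mono inter_subset_right).trans_lt hμV |>.ne
  have hle : μ (B ∩ V) ≤ c * μ (B ∩ V) := by
    refine ENNReal.le_of_forall_pos_le_add fun ε hε _ ↦ ?_
    obtain ⟨U, hBU, hU, hμU⟩ := (B ∩ V).exists_isOpen_lt_add (μ := μ) hfin
      (ENNReal.coe_ne_zero.2 hε.ne')
    calc μ (B ∩ V) ≤ c * μ U := measure_le_mul_of_frequently_measure_inter_closedBall_le hU hBU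
          fun y hy ↦ (h y hy.1).mono fun r ⟨hdoub, hdens⟩ ↦
            ⟨hdoub, (measure_mono (inter_subset_inter_left _ inter_subset_left)).trans hdens⟩
      _ ≤ c * μ (B ∩ V) + c * ε := by rw [← mul_add]; gcongr
      _ ≤ c * μ (B ∩ V) + ε := by gcongr; exact mul_le_of_le_one_left' hc.le
  by_contra h0
  exact (hle.trans_lt ((ENNReal.mul_lt_mul_left h0 hfin hc).trans_eq (one_mul _))).false

lemma measure_setOf_liminf_measure_inter_ball_div_lt_one [μ.OuterRegular]
    (hdoub : ∀ᵐ x ∂μ, limsup (fun r ↦ μ (ball x (2 * r)) / μ (ball x r)) (𝓝[>] 0) < ⊤)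
    (A : Set X) :
    μ {x ∈ A | liminf (fun r ↦ μ (A ∩ ball x r) / μ (ball x r)) (𝓝[>] 0) < 1} = 0 := by
  let D : ℕ → Set X := fun n ↦
    {x | ∀ᶠ r in 𝓝[>] 0, μ (closedBall x (3 * r)) ≤ n * μ (closedBall x r)}
  have hD : μ {x | x ∉ ⋃ n, D n} = 0 := ae_iff.1 <| hdoub.mono fun x hx ↦
    mem_iUnion.2 (exists_nat_eventually_measure_closedBall_three_mul_le x hx)
  let P : ℕ → ℚ → Set X := fun n q ↦ {x ∈ A ∩ D n |
    liminf (fun r ↦ μ (A ∩ ball x r) / μ (ball x r)) (𝓝[>] 0) < ((q : ℝ).toNNReal : ℝ≥0∞)}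
  have hP (n : ℕ) (q : ℚ) (hq : ((q : ℝ).toNNReal : ℝ≥0∞) < 1) : μ (P n q) = 0 :=
    measure_eq_zero_of_frequently_measure_inter_closedBall_le (C := n) hq fun x hx ↦
      ((frequently_measure_inter_closedBall_le_of_liminf_lt A x hx.2).and_eventually hx.1.2).mono
        fun r ⟨hdens, hdoub⟩ ↦ ⟨by exact_mod_cast hdoub,
          (measure_mono (inter_subset_inter_left _ fun y hy ↦ hy.1.1)).trans hdens⟩
  refine measure_mono_null (fun x hx ↦ ?_) (measure_union_null hD (measure_iUnion_null fun n ↦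
    measure_iUnion_null fun q ↦ measure_iUnion_null (hP n q)))
  by_cases hxD : x ∈ ⋃ n, D n
  · obtain ⟨n, hn⟩ := mem_iUnion.1 hxD
    obtain ⟨q, -, hlq, hq1⟩ := ENNReal.lt_iff_exists_rat_btwn.1 hx.2
    exact Or.inr (mem_iUnion.2 ⟨n, mem_iUnion.2 ⟨q, mem_iUnion.2 ⟨hq1, ⟨hx.1, hn⟩, hlq⟩⟩⟩)
  · exact Or.inl hxD

end Covering

end MeasureTheory

theorem ae_density_point_of_asymptotically_doubling_general
    {X : Type*} [MetricSpace X] [TopologicalSpace.SeparableSpace X]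
    [MeasurableSpace X] [BorelSpace X]
    (μ : Measure X) [IsLocallyFiniteMeasure μ]
    (hdoub : ∀ᵐ x ∂μ,
      Filter.limsup (fun r : ℝ => μ (ball x (2 * r)) / μ (ball x r)) (𝓝[>] 0) < ⊤) :
    ∀ A : Set X,
      μ {x ∈ A | ¬ Tendsto (fun r : ℝ => μ (A ∩ ball x r) / μ (ball x r)) (𝓝[>] 0) (𝓝 1)}
        = 0 := by
  intro A
  have : SecondCountableTopology X := UniformSpace.secondCountable_of_separable X
  refine measure_mono_null ?_ (measure_setOf_liminf_measure_inter_ball_div_lt_one hdoub A)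
  rintro x ⟨hxA, hx⟩
  refine ⟨hxA, lt_of_not_ge fun hle ↦ hx (tendsto_of_le_liminf_of_limsup_le hle ?_)⟩
  refine limsup_le_of_le (by isBoundedDefault) (Eventually.of_forall fun r ↦ ?_)
  exact ENNReal.div_le_of_le_mul (by rw [one_mul]; exact measure_mono inter_subset_right)

/-- If `μ` is an asymptotically doubling Radon measure on a complete
separable metric space, then for every (not necessarily measurable) set `A`, `μ`-almost every
point of `A` is a density point of `A` relative to the outer measure induced by `μ` (the
coercion of `μ` to a set function is this outer measure). -/
theorem ae_density_point_of_asymptotically_doubling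
    {X : Type*} [MetricSpace X] [CompleteSpace X] [TopologicalSpace.SeparableSpace X]
    [MeasurableSpace X] [BorelSpace X]
    (μ : Measure X) [IsLocallyFiniteMeasure μ] [μ.InnerRegular]
    (hdoub : ∀ᵐ x ∂μ,
      Filter.limsup (fun r : ℝ => μ (ball x (2 * r)) / μ (ball x r)) (𝓝[>] 0) < ⊤) :
    ∀ A : Set X,
      μ {x ∈ A | ¬ Tendsto (fun r : ℝ => μ (A ∩ ball x r) / μ (ball x r)) (𝓝[>] 0) (𝓝 1)}
        = 0 :=
  ae_density_point_of_asymptotically_doubling_general μ hdoub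
end
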